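/- Let p be prime and V ⊆ (Z/pZ)^r finite. Suppose for every nonzero u ∈ (Z/pZ)^r, |∑_{z ∈ V} e^{2πi(u·z)/p}| ≤ K. Let B be a box of intervals with vol(B) > K²·p^{2r}/|V|². Then there exists x ∈ (Z/pZ)^r with N_{B_x}(V) ≥ 1; in fact the number of x with N_{B_x}(V) = 0 is at most K²·vol(B)·p^{2r}/(|V|²·vol(B)²) = K²·p^{2r}/(|V|²·vol(B)). -/

import Mathlib

open Finset

/-- The standard additive character `e_p(t) = e^{2πi t/p}` on `ZMod p`. -/
noncomputable def ep (p : ℕ) (t : ZMod p) : ℂ :=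
  Complex.exp (2 * Real.pi * Complex.I * t.val / p)

/-- The interval `{a, a+1, ..., a+L-1}` of `L` consecutive residues mod `p`. -/
def interval (p : ℕ) (a : ZMod p) (L : ℕ) : Finset (ZMod p) :=
  (Finset.range L).image fun m : ℕ => a + (m : ZMod p)

/-!
Put `N x = #{v ∈ V | v - x ∈ B}`. As a function of `x` this is the convolution of `1_V` with
`1_{-B}`, so its Fourier coefficient at `u` is `V̂(u) · conj B̂(u)`. By Plancherel,
`p^r ∑ₓ N(x)²` equals `∑ᵤ |V̂(u)|² |B̂(u)|²`; the term `u = 0` is `(|V| |B|)²`, which is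
`(∑ₓ N(x))²`, and the remaining terms are at most `K² ∑ᵤ |B̂(u)|² = K² p^r |B|`. So the variance
of `N` about its mean `|V| |B| / p^r` is at most `K² |B|`, and Chebyshev's inequality bounds the
number of zeros of `N` by `K² p^{2r} / (|V|² |B|)`, which the volume hypothesis makes less than `1`.
-/

open Matrix
open scoped ComplexConjugate

/-- Chebyshev's inequality at the zeros of `f`, multiplied through by `(card ι)²`. -/
lemma card_filter_eq_zero_mul_sq_sum_le {ι : Type*} [Fintype ι] (f : ι → ℝ) :
    #{x | f x = 0} * (∑ x, f x) ^ 2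
      ≤ Fintype.card ι * (Fintype.card ι * ∑ x, f x ^ 2 - (∑ x, f x) ^ 2) := by
  classical
  set n : ℝ := (Fintype.card ι : ℝ) with hn
  set S := ∑ x, f x
  calc (#{x | f x = 0} : ℝ) * S ^ 2 = ∑ x ∈ {x | f x = 0}, (n * f x - S) ^ 2 := by
        rw [sum_congr rfl fun x hx => by rw [(mem_filter.1 hx).2, mul_zero, zero_sub, neg_sq],
          sum_const, nsmul_eq_mul]
    _ ≤ ∑ x, (n * f x - S) ^ 2 :=
        sum_le_sum_of_subset_of_nonneg (subset_univ _) fun _ _ _ => sq_nonneg _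
    _ = n * (n * ∑ x, f x ^ 2 - S ^ 2) := by
        simp_rw [sub_sq, sum_add_distrib, sum_sub_distrib, mul_pow, ← mul_sum, ← sum_mul,
          sum_const, card_univ, nsmul_eq_mul, ← hn]
        rw [← mul_sum, ← mul_sum]
        ring

lemma card_interval {p L : ℕ} (a : ZMod p) (hL : L ≤ p) : #(interval p a L) = L := by
  rw [interval, card_image_of_injOn, card_range]
  intro m hm n hn h
  have := congrArg ZMod.val (add_left_cancel h)
  rwa [ZMod.val_natCast_of_lt (lt_of_lt_of_le (mem_range.1 hm) hL),
    ZMod.val_natCast_of_lt (lt_of_lt_of_le (mem_range.1 hn) hL)] at this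

section CharacterSums

variable {p r : ℕ} [NeZero p]

lemma ep_eq_stdAddChar : ep p = ZMod.stdAddChar := by
  funext t
  rw [ep, ZMod.stdAddChar_apply, ZMod.toCircle_apply]

noncomputable def dotChar (t : Fin r → ZMod p) : AddChar (Fin r → ZMod p) ℂ :=
  ZMod.stdAddChar.compAddMonoidHom (AddMonoidHom.mk' (· ⬝ᵥ t) fun u v => add_dotProduct u v t)

lemma dotChar_apply (t u : Fin r → ZMod p) : dotChar t u = ep p (u ⬝ᵥ t) := by
  rw [ep_eq_stdAddChar]; rfl

lemma dotChar_eq_zero_iff {t : Fin r → ZMod p} : dotChar t = 0 ↔ t = 0 := by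
  refine ⟨fun h => funext fun i => ?_, fun h => ?_⟩
  · have := DFunLike.congr_fun h (Pi.single i 1)
    rwa [dotChar_apply, single_dotProduct, one_mul, AddChar.zero_apply, ep_eq_stdAddChar,
      ← AddChar.map_zero_eq_one (ZMod.stdAddChar (N := p)), ZMod.injective_stdAddChar.eq_iff] at this
  · ext u
    rw [dotChar_apply, h, dotProduct_zero, ep_eq_stdAddChar, AddChar.map_zero_eq_one,
      AddChar.zero_apply]

lemma sum_ep_dotProduct (t : Fin r → ZMod p) :
    ∑ u, ep p (u ⬝ᵥ t) = if t = 0 then (p : ℂ) ^ r else 0 := by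
  simp_rw [← dotChar_apply, AddChar.sum_eq_ite, dotChar_eq_zero_iff, Fintype.card_pi,
    ZMod.card, prod_const, card_univ, Fintype.card_fin]
  push_cast; rfl

lemma ep_dotProduct_sub (u x y : Fin r → ZMod p) :
    ep p (u ⬝ᵥ (x - y)) = ep p (u ⬝ᵥ x) * conj (ep p (u ⬝ᵥ y)) := by
  rw [dotProduct_sub, sub_eq_add_neg, ep_eq_stdAddChar, AddChar.map_add_eq_mul,
    AddChar.map_neg_eq_conj]

lemma sum_norm_sq_sum_mul_ep (f : (Fin r → ZMod p) → ℂ) :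
    ∑ u, ‖∑ x, f x * ep p (u ⬝ᵥ x)‖ ^ 2 = (p : ℝ) ^ r * ∑ x, ‖f x‖ ^ 2 := by
  apply Complex.ofReal_injective
  push_cast
  simp_rw [← Complex.mul_conj', map_sum, map_mul, sum_mul_sum, mul_sum]
  calc ∑ u, ∑ x, ∑ y, f x * ep p (u ⬝ᵥ x) * (conj (f y) * conj (ep p (u ⬝ᵥ y)))
      = ∑ x, ∑ y, f x * conj (f y) * ∑ u, ep p (u ⬝ᵥ (x - y)) := by
        rw [sum_comm]; refine sum_congr rfl fun x _ => ?_
        rw [sum_comm]; refine sum_congr rfl fun y _ => ?_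
        rw [mul_sum]; refine sum_congr rfl fun u _ => ?_
        rw [ep_dotProduct_sub]; ring
    _ = ∑ x, (p : ℂ) ^ r * (f x * conj (f x)) := by
        refine sum_congr rfl fun x _ => ?_
        simp_rw [sum_ep_dotProduct, sub_eq_zero, mul_ite, mul_zero]
        rw [Fintype.sum_ite_eq]; ring

lemma sum_card_filter_sub_mem_mul_ep (V B : Finset (Fin r → ZMod p)) (u : Fin r → ZMod p) :
    ∑ x, (#{v ∈ V | v - x ∈ B} : ℂ) * ep p (u ⬝ᵥ x)
      = (∑ v ∈ V, ep p (u ⬝ᵥ v)) * conj (∑ b ∈ B, ep p (u ⬝ᵥ b)) := by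
  simp_rw [map_sum, sum_mul_sum, natCast_card_filter, sum_mul]
  rw [sum_comm]
  refine sum_congr rfl fun v _ => ?_
  rw [← (Equiv.subLeft v).sum_comp]
  simp_rw [Equiv.subLeft_apply, sub_sub_cancel, ite_mul, one_mul, zero_mul, sum_ite_mem,
    univ_inter, ep_dotProduct_sub]

lemma sum_card_filter_sub_mem (V B : Finset (Fin r → ZMod p)) :
    ∑ x, #{v ∈ V | v - x ∈ B} = #V * #B := by
  have := sum_card_filter_sub_mem_mul_ep V B 0
  simp only [zero_dotProduct, ep_eq_stdAddChar, AddChar.map_zero_eq_one, mul_one, sum_const,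
    nsmul_one, map_natCast] at this
  exact_mod_cast this

lemma sum_norm_sq_sum_ep (B : Finset (Fin r → ZMod p)) :
    ∑ u, ‖∑ b ∈ B, ep p (u ⬝ᵥ b)‖ ^ 2 = (p : ℝ) ^ r * #B := by
  have := sum_norm_sq_sum_mul_ep (fun x => if x ∈ B then (1 : ℂ) else 0)
  simp only [ite_mul, one_mul, zero_mul, sum_ite_mem, univ_inter] at this
  rw [this]
  simp [apply_ite (fun z : ℂ => ‖z‖ ^ 2)]

lemma pow_mul_sum_card_filter_sub_mem_sq_le (V B : Finset (Fin r → ZMod p)) {K : ℝ}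
    (hK : ∀ u ≠ 0, ‖∑ z ∈ V, ep p (u ⬝ᵥ z)‖ ≤ K) :
    (p : ℝ) ^ r * ∑ x, (#{v ∈ V | v - x ∈ B} : ℝ) ^ 2
      ≤ (#V * #B) ^ 2 + K ^ 2 * ((p : ℝ) ^ r * #B) := by
  set V' := fun u => ‖∑ z ∈ V, ep p (u ⬝ᵥ z)‖
  set B' := fun u => ‖∑ b ∈ B, ep p (u ⬝ᵥ b)‖
  have hplancherel : (p : ℝ) ^ r * ∑ x, (#{v ∈ V | v - x ∈ B} : ℝ) ^ 2
      = ∑ u, V' u ^ 2 * B' u ^ 2 := by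
    have := sum_norm_sq_sum_mul_ep (fun x => (#{v ∈ V | v - x ∈ B} : ℂ))
    simp only [sum_card_filter_sub_mem_mul_ep, norm_mul, Complex.norm_conj, mul_pow,
      Complex.norm_natCast] at this
    exact this.symm
  have hzero : V' 0 ^ 2 * B' 0 ^ 2 = (#V * #B) ^ 2 := by
    simp [V', B', ep_eq_stdAddChar, mul_pow]
  calc (p : ℝ) ^ r * ∑ x, (#{v ∈ V | v - x ∈ B} : ℝ) ^ 2
      = V' 0 ^ 2 * B' 0 ^ 2 + ∑ u ∈ univ.erase 0, V' u ^ 2 * B' u ^ 2 := by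
        rw [hplancherel, ← add_sum_erase _ _ (mem_univ _)]
    _ ≤ (#V * #B) ^ 2 + ∑ u ∈ univ.erase 0, K ^ 2 * B' u ^ 2 := by
        rw [hzero]
        gcongr with u hu
        exact hK u (ne_of_mem_erase hu)
    _ ≤ (#V * #B) ^ 2 + K ^ 2 * ∑ u, B' u ^ 2 := by
        rw [← mul_sum]
        gcongr
        exact erase_subset _ _
    _ = (#V * #B) ^ 2 + K ^ 2 * ((p : ℝ) ^ r * #B) := by rw [sum_norm_sq_sum_ep]

lemma card_filter_card_eq_zero_mul_sq_le (V B : Finset (Fin r → ZMod p))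
    {K : ℝ} (hK : ∀ u ≠ 0, ‖∑ z ∈ V, ep p (u ⬝ᵥ z)‖ ≤ K) :
    #{x | #{v ∈ V | v - x ∈ B} = 0} * ((#V : ℝ) * #B) ^ 2 ≤ K ^ 2 * (p : ℝ) ^ (2 * r) * #B := by
  have hcheb := card_filter_eq_zero_mul_sq_sum_le fun x => (#{v ∈ V | v - x ∈ B} : ℝ)
  have hsum : ∑ x, (#{v ∈ V | v - x ∈ B} : ℝ) = #V * #B := by
    exact_mod_cast sum_card_filter_sub_mem V B
  simp only [Nat.cast_eq_zero, hsum, Fintype.card_pi, ZMod.card, prod_const, card_univ,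
    Fintype.card_fin, Nat.cast_pow] at hcheb
  calc _ ≤ (p : ℝ) ^ r * ((p : ℝ) ^ r * ∑ x, (#{v ∈ V | v - x ∈ B} : ℝ) ^ 2 - (#V * #B) ^ 2) :=
        hcheb
    _ ≤ (p : ℝ) ^ r * (K ^ 2 * ((p : ℝ) ^ r * #B)) := by
        gcongr
        linarith [pow_mul_sum_card_filter_sub_mem_sq_le V B hK]
    _ = K ^ 2 * (p : ℝ) ^ (2 * r) * #B := by ring

end CharacterSums

theorem stmt_12_general (p r : ℕ) [NeZero p]
    (V : Finset (Fin r → ZMod p)) (hVpos : 0 < V.card) (K : ℝ)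
    (hK : ∀ u : Fin r → ZMod p, u ≠ 0 →
      ‖∑ z ∈ V, ep p (∑ i, u i * z i)‖ ≤ K)
    (a : Fin r → ZMod p) (L : Fin r → ℕ) (hL : ∀ i, L i ≤ p)
    (hvol : K ^ 2 * (p : ℝ) ^ (2 * r) / (V.card : ℝ) ^ 2 < ∏ i, (L i : ℝ)) :
    (∃ x : Fin r → ZMod p,
        1 ≤ (V.filter fun v => ∀ i, v i - x i ∈ interval p (a i) (L i)).card) ∧
      (((Finset.univ.filter fun x : Fin r → ZMod p =>
          (V.filter fun v => ∀ i, v i - x i ∈ interval p (a i) (L i)).card = 0).card : ℝ) ≤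
        K ^ 2 * (p : ℝ) ^ (2 * r) / ((V.card : ℝ) ^ 2 * ∏ i, (L i : ℝ))) := by
  set B := Fintype.piFinset fun i => interval p (a i) (L i)
  have hbox : ∀ x : Fin r → ZMod p,
      {v ∈ V | ∀ i, v i - x i ∈ interval p (a i) (L i)} = {v ∈ V | v - x ∈ B} := fun x => by
    simp [B]
  have hcardB : (#B : ℝ) = ∏ i, (L i : ℝ) := by
    simp [B, Fintype.card_piFinset, card_interval _ (hL _)]
  have hV : (0 : ℝ) < #V := by exact_mod_cast hVpos
  have hvol' : 0 < ∏ i, (L i : ℝ) := lt_of_le_of_lt (by positivity) hvol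
  simp only [hbox]
  have hbound := card_filter_card_eq_zero_mul_sq_le V B hK
  rw [hcardB] at hbound
  have hzeros : (#{x | #{v ∈ V | v - x ∈ B} = 0} : ℝ)
      ≤ K ^ 2 * (p : ℝ) ^ (2 * r) / ((#V : ℝ) ^ 2 * ∏ i, (L i : ℝ)) := by
    rw [le_div_iff₀ (by positivity)]
    refine le_of_mul_le_mul_right ?_ hvol'
    linear_combination hbound
  refine ⟨?_, hzeros⟩
  have hnone : #{x | #{v ∈ V | v - x ∈ B} = 0} < 1 := by
    have : K ^ 2 * (p : ℝ) ^ (2 * r) / ((#V : ℝ) ^ 2 * ∏ i, (L i : ℝ)) < 1 := by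
      rwa [← div_div, div_lt_one hvol']
    exact_mod_cast hzeros.trans_lt this
  rw [Nat.lt_one_iff, card_eq_zero, filter_eq_empty_iff] at hnone
  exact ⟨0, Nat.one_le_iff_ne_zero.2 (hnone (mem_univ 0))⟩

theorem stmt_12 (p r : ℕ) (hp : p.Prime) [NeZero p] (hr : 1 ≤ r)
    (V : Finset (Fin r → ZMod p)) (hVpos : 0 < V.card) (K : ℝ)
    (hK : ∀ u : Fin r → ZMod p, u ≠ 0 →
      ‖∑ z ∈ V, ep p (∑ i, u i * z i)‖ ≤ K)
    (a : Fin r → ZMod p) (L : Fin r → ℕ) (hL : ∀ i, L i ≤ p)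
    (hvol : K ^ 2 * (p : ℝ) ^ (2 * r) / (V.card : ℝ) ^ 2 < ∏ i, (L i : ℝ)) :
    (∃ x : Fin r → ZMod p,
        1 ≤ (V.filter fun v => ∀ i, v i - x i ∈ interval p (a i) (L i)).card) ∧
      (((Finset.univ.filter fun x : Fin r → ZMod p =>
          (V.filter fun v => ∀ i, v i - x i ∈ interval p (a i) (L i)).card = 0).card : ℝ) ≤
        K ^ 2 * (p : ℝ) ^ (2 * r) / ((V.card : ℝ) ^ 2 * ∏ i, (L i : ℝ))) :=
  stmt_12_general p r V hVpos K hK a L hL hvol
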